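/- arXiv:2305.12079 — 2 statements merged into one kernel-verified Lean document; each statement's English description precedes it below -/
import Mathlib

section
/- In the two-party state-cutting model, if both parties agree exactly on the distribution of party support (v_1^1 ≡ v_2^1), then a GT partition always exists: there is an m-partition (P,T) such that each party i wins at least ⌊(min_{(P',T')} u_i^i(P',T') + max_{(P',T')} u_i^i(P',T'))/2⌋ districts according to its own data. -/
open MeasureTheory Set

noncomputable section

/-- A district is a finite union of closed intervals contained in `[0,1]`. -/
def IsDistrict (D : Set ℝ) : Prop :=
  D ⊆ Icc 0 1 ∧ ∃ s : Finset (ℝ × ℝ), D = ⋃ p ∈ s, Icc p.1 p.2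

/-- Lebesgue measure of a set, as a real number. -/
def mu (D : Set ℝ) : ℝ := (volume D).toReal

/-- The voter mass of `D` with respect to density `f`. -/
def vmass (f : ℝ → ℝ) (D : Set ℝ) : ℝ := ∫ x in D, f x

/-- An `m`-partition of `[0,1]`: `m` districts of measure `1/m`, pairwise
intersecting in measure zero, covering `[0,1]`, with a tie-breaking rule. -/
structure MPartition (m : ℕ) where
  dist : Fin m → Set ℝ
  tie : Fin m → Fin 2
  isDistrict : ∀ k, IsDistrict (dist k)
  measure_eq : ∀ k, mu (dist k) = 1 / m
  almost_disjoint : ∀ k₁ k₂, k₁ ≠ k₂ → mu (dist k₁ ∩ dist k₂) = 0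
  cover : (⋃ k, dist k) = Icc 0 1

/-- Party `j` wins district `k` (according to the beliefs `g`, where `g j` is the
density of party `j`'s support) under the partition `P`. -/
def Wins (g : Fin 2 → ℝ → ℝ) {m : ℕ} (P : MPartition m) (j : Fin 2) (k : Fin m) : Prop :=
  vmass (g j) (P.dist k) > 1 / (2 * m) ∨
    (vmass (g j) (P.dist k) = 1 / (2 * m) ∧ P.tie k = j)

/-- The number of districts party `j` wins under `P` according to beliefs `g`. -/
def seats (g : Fin 2 → ℝ → ℝ) {m : ℕ} (P : MPartition m) (j : Fin 2) : ℕ :=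
  Nat.card {k : Fin m // Wins g P j k}

/-- The set of possible seat counts for party `j` over all `m`-partitions. -/
def seatSet (g : Fin 2 → ℝ → ℝ) (m : ℕ) (j : Fin 2) : Set ℕ :=
  {u | ∃ P : MPartition m, seats g P j = u}

/-- A district is competitive (w.r.t. beliefs `g`) if some party has exactly
half of the support in it. -/
def Competitive (g : Fin 2 → ℝ → ℝ) (D : Set ℝ) : Prop :=
  ∃ j : Fin 2, vmass (g j) D = mu D / 2

/-- `mi` is the largest integer `k` such that some district of measure `k/m`
is competitive. -/
def MaxCompetitive (m : ℕ) (g : Fin 2 → ℝ → ℝ) (mi : ℕ) : Prop :=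
  (∃ D, IsDistrict D ∧ Competitive g D ∧ mu D = (mi : ℝ) / m) ∧
  ∀ k : ℕ, (∃ D, IsDistrict D ∧ Competitive g D ∧ mu D = (k : ℝ) / m) → k ≤ mi



namespace GTaux

variable {n : ℕ} {y : ℕ → ℝ}

lemma y_le_y (hmono : ∀ r < n, y r ≤ y (r+1)) {r s : ℕ} (hrs : r ≤ s) (hs : s ≤ n) :
    y r ≤ y s := by
  induction s with
  | zero => simpa [Nat.le_zero.mp hrs]
  | succ k ih =>
    rcases Nat.lt_or_ge r (k+1) with h | h
    · exact le_trans (ih (Nat.lt_succ_iff.mp h) (le_trans (Nat.le_succ k) hs))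
        (hmono k (by omega))
    · have : r = k + 1 := le_antisymm hrs h
      simp [this]

lemma cover_union (hmono : ∀ r < n, y r ≤ y (r+1)) {k : ℕ} (h1 : 1 ≤ k) (hk : k ≤ n) :
    (⋃ r ∈ Finset.range k, Icc (y r) (y (r+1))) = Icc (y 0) (y k) := by
  induction k with
  | zero => omega
  | succ j ih =>
    rcases Nat.eq_or_lt_of_le h1 with h | h
    · simp [← h]
    · have hj1 : 1 ≤ j := by omega
      have hjn : j ≤ n := by omega
      rw [Finset.range_add_one]
      rw [Finset.set_biUnion_insert, ih hj1 hjn, Set.union_comm,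
        Set.Icc_union_Icc_eq_Icc (y_le_y hmono (Nat.zero_le j) hjn) (hmono j (by omega))]

lemma Icc_inter_subsingleton (hmono : ∀ r < n, y r ≤ y (r+1)) {r s : ℕ}
    (hrs : r < s) (hs : s < n) :
    (Icc (y r) (y (r+1)) ∩ Icc (y s) (y (s+1))).Subsingleton := by
  intro a ha b hb
  have h1 : y (r+1) ≤ y s := y_le_y hmono hrs (le_of_lt hs)
  have : a = y s := le_antisymm (le_trans ha.1.2 h1) ha.2.1
  have hb' : b = y s := le_antisymm (le_trans hb.1.2 h1) hb.2.1
  rw [this, hb']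

lemma aedisjoint_Icc (hmono : ∀ r < n, y r ≤ y (r+1)) {r s : ℕ}
    (hrn : r < n) (hs : s < n) (hne : r ≠ s) :
    AEDisjoint volume (Icc (y r) (y (r+1))) (Icc (y s) (y (s+1))) := by
  rcases Nat.lt_or_ge r s with h | h
  · exact (Icc_inter_subsingleton hmono h hs).measure_zero volume
  · have hsr : s < r := lt_of_le_of_ne h (Ne.symm hne)
    have := (Icc_inter_subsingleton hmono hsr hrn).measure_zero volume
    rwa [Set.inter_comm] at this

lemma volume_biUnion (hmono : ∀ r < n, y r ≤ y (r+1)) {S : Finset ℕ}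
    (hS : S ⊆ Finset.range n) :
    volume (⋃ r ∈ S, Icc (y r) (y (r+1))) = ∑ r ∈ S, ENNReal.ofReal (y (r+1) - y r) := by
  rw [measure_biUnion_finset₀]
  · refine Finset.sum_congr rfl fun r hr => ?_
    rw [Real.volume_Icc]
  · intro r hr s hs hne
    exact aedisjoint_Icc hmono (Finset.mem_range.mp (hS hr)) (Finset.mem_range.mp (hS hs)) hne
  · exact fun r _ => measurableSet_Icc.nullMeasurableSet

lemma integral_biUnion (hmono : ∀ r < n, y r ≤ y (r+1)) {S : Finset ℕ}
    (hS : S ⊆ Finset.range n) {f : ℝ → ℝ} (hf : Integrable f) :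
    ∫ x in (⋃ r ∈ S, Icc (y r) (y (r+1))), f x
      = ∑ r ∈ S, ∫ x in Icc (y r) (y (r+1)), f x := by
  classical
  induction S using Finset.induction with
  | empty => simp
  | @insert a S' hnot ih =>
    have haS : a ∈ Finset.range n := hS (Finset.mem_insert_self a S')
    have hS' : S' ⊆ Finset.range n := fun x hx => hS (Finset.mem_insert_of_mem hx)
    rw [Finset.set_biUnion_insert, Finset.sum_insert hnot, ← ih hS']
    refine integral_union_ae ?_ ?_ hf.integrableOn hf.integrableOn
    · rw [AEDisjoint, Set.inter_iUnion₂]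
      refine measure_biUnion_null_iff S'.countable_toSet |>.mpr fun s hs => ?_
      exact aedisjoint_Icc hmono (Finset.mem_range.mp haS)
        (Finset.mem_range.mp (hS' hs)) (by rintro rfl; exact hnot hs)
    · exact (MeasurableSet.biUnion S'.countable_toSet
        fun _ _ => measurableSet_Icc).nullMeasurableSet

/-- primitive -/
def prim (f : ℝ → ℝ) (x : ℝ) : ℝ := ∫ t in (0:ℝ)..x, f t

lemma continuous_prim {f : ℝ → ℝ} (hf : Integrable f) : Continuous (prim f) :=
  hf.continuous_primitive 0

lemma integral_Icc_eq_prim {f : ℝ → ℝ} (hf : Integrable f) {a b : ℝ} (hab : a ≤ b) :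
    ∫ x in Icc a b, f x = prim f b - prim f a := by
  have h := intervalIntegral.integral_add_adjacent_intervals
    (a := 0) (b := a) (c := b) hf.intervalIntegrable hf.intervalIntegrable
  have : ∫ x in a..b, f x = prim f b - prim f a := by
    unfold prim; linarith [h]
  rw [← this, intervalIntegral.integral_of_le hab, integral_Icc_eq_integral_Ioc]


section builder
open Classical in
/-- district from cutpoints and coloring -/
def bdist {m : ℕ} (n : ℕ) (y : ℕ → ℝ) (c : ℕ → Fin m) (j : Fin m) : Set ℝ :=
  ⋃ r ∈ (Finset.range n).filter (fun r => c r = j), Icc (y r) (y (r+1))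

variable {m : ℕ} {c : ℕ → Fin m}

lemma bdist_measurable (j : Fin m) : MeasurableSet (bdist n y c j) :=
  (Finset.range n).filter _ |>.measurableSet_biUnion fun _ _ => measurableSet_Icc

lemma bdist_subset (hmono : ∀ r < n, y r ≤ y (r+1)) (hy0 : y 0 = 0) (hyn : y n = 1)
    (j : Fin m) : bdist n y c j ⊆ Icc 0 1 := by
  refine Set.iUnion₂_subset fun r hr => ?_
  have hrn : r < n := Finset.mem_range.mp (Finset.mem_filter.mp hr).1
  refine Set.Icc_subset_Icc ?_ ?_
  · rw [← hy0]; exact y_le_y hmono (Nat.zero_le r) (le_of_lt hrn)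
  · rw [← hyn]; exact y_le_y hmono hrn (le_refl n)

lemma bdist_isDistrict (hmono : ∀ r < n, y r ≤ y (r+1)) (hy0 : y 0 = 0) (hyn : y n = 1)
    (j : Fin m) : IsDistrict (bdist n y c j) := by
  classical
  refine ⟨bdist_subset hmono hy0 hyn j, ⟨((Finset.range n).filter (fun r => c r = j)).image
    (fun r => (y r, y (r+1))), ?_⟩⟩
  ext x
  simp only [bdist, Set.mem_iUnion, Finset.mem_image, exists_prop]
  constructor
  · rintro ⟨r, hr, hx⟩; exact ⟨(y r, y (r+1)), ⟨r, hr, rfl⟩, hx⟩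
  · rintro ⟨p, ⟨r, hr, rfl⟩, hx⟩; exact ⟨r, hr, hx⟩

lemma bdist_mu (hmono : ∀ r < n, y r ≤ y (r+1)) (j : Fin m) :
    mu (bdist n y c j) = ∑ r ∈ (Finset.range n).filter (fun r => c r = j), (y (r+1) - y r) := by
  classical
  rw [mu, bdist, volume_biUnion hmono (Finset.filter_subset _ _)]
  rw [← ENNReal.ofReal_sum_of_nonneg, ENNReal.toReal_ofReal]
  · exact Finset.sum_nonneg fun r hr => sub_nonneg.mpr
      (hmono r (Finset.mem_range.mp (Finset.mem_filter.mp hr).1))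
  · exact fun r hr => sub_nonneg.mpr (hmono r (Finset.mem_range.mp (Finset.mem_filter.mp hr).1))

lemma bdist_vmass (hmono : ∀ r < n, y r ≤ y (r+1)) {f : ℝ → ℝ} (hf : Integrable f) (j : Fin m) :
    vmass f (bdist n y c j)
      = ∑ r ∈ (Finset.range n).filter (fun r => c r = j), (prim f (y (r+1)) - prim f (y r)) := by
  classical
  rw [vmass, bdist, integral_biUnion hmono (Finset.filter_subset _ _) hf]
  refine Finset.sum_congr rfl fun r hr => ?_
  exact integral_Icc_eq_prim hf (hmono r (Finset.mem_range.mp (Finset.mem_filter.mp hr).1))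

lemma bdist_almost_disjoint (hmono : ∀ r < n, y r ≤ y (r+1)) {j j' : Fin m} (hjj : j ≠ j') :
    mu (bdist n y c j ∩ bdist n y c j') = 0 := by
  classical
  have : volume (bdist n y c j ∩ bdist n y c j') = 0 := by
    rw [bdist, bdist, Set.iUnion₂_inter]
    refine measure_biUnion_null_iff (Finset.countable_toSet _) |>.mpr fun r hr => ?_
    rw [Set.inter_iUnion₂]
    refine measure_biUnion_null_iff (Finset.countable_toSet _) |>.mpr fun s hs => ?_
    have hr' := Finset.mem_filter.mp hr
    have hs' := Finset.mem_filter.mp hs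
    refine aedisjoint_Icc hmono (Finset.mem_range.mp hr'.1) (Finset.mem_range.mp hs'.1) ?_
    rintro rfl; exact hjj (hr'.2.symm.trans hs'.2)
  rw [mu, this, ENNReal.toReal_zero]

lemma bdist_cover (hmono : ∀ r < n, y r ≤ y (r+1)) (hy0 : y 0 = 0) (hyn : y n = 1) :
    (⋃ j, bdist n y c j) = Icc 0 1 := by
  classical
  have hn : 1 ≤ n := by
    by_contra h
    have : n = 0 := by omega
    rw [this] at hyn; rw [hyn] at hy0; norm_num at hy0
  have : (⋃ j, bdist n y c j) = ⋃ r ∈ Finset.range n, Icc (y r) (y (r+1)) := by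
    ext x
    simp only [bdist, Set.mem_iUnion, Finset.mem_filter, exists_prop, Finset.mem_range]
    constructor
    · rintro ⟨j, r, ⟨hr, _⟩, hx⟩; exact ⟨r, hr, hx⟩
    · rintro ⟨r, hr, hx⟩; exact ⟨c r, r, ⟨hr, rfl⟩, hx⟩
  rw [this, cover_union hmono hn (le_refl n), hy0, hyn]

/-- The partition built from cutpoints, a coloring and a tie rule. -/
def buildPart (n : ℕ) (y : ℕ → ℝ) (c : ℕ → Fin m) (tie : Fin m → Fin 2)
    (hmono : ∀ r < n, y r ≤ y (r+1)) (hy0 : y 0 = 0) (hyn : y n = 1)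
    (hsum : ∀ j, ∑ r ∈ (Finset.range n).filter (fun r => c r = j), (y (r+1) - y r) = 1/m) :
    MPartition m where
  dist := bdist n y c
  tie := tie
  isDistrict := bdist_isDistrict hmono hy0 hyn
  measure_eq j := by rw [bdist_mu hmono, hsum]
  almost_disjoint _ _ h := bdist_almost_disjoint hmono h
  cover := bdist_cover hmono hy0 hyn

end builder



/-- the `r`-th element of the sorted list of `E` -/
def yE (E : Finset ℝ) (r : ℕ) : ℝ := (E.sort (· ≤ ·)).getD r 0

lemma yE_mem {E : Finset ℝ} {r : ℕ} (hr : r < E.card) : yE E r ∈ E := by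
  have hl : r < (E.sort (· ≤ ·)).length := by rwa [Finset.length_sort]
  rw [yE, List.getD_eq_getElem _ _ hl]
  exact (Finset.mem_sort (α := ℝ) (· ≤ ·)).mp (List.getElem_mem hl)

lemma yE_index_mono {E : Finset ℝ} {r s : ℕ} (hrs : r ≤ s) (hs : s < E.card) :
    yE E r ≤ yE E s := by
  have hls : s < (E.sort (· ≤ ·)).length := by rwa [Finset.length_sort]
  have hlr : r < (E.sort (· ≤ ·)).length := lt_of_le_of_lt hrs hls
  rw [yE, yE, List.getD_eq_getElem _ _ hlr, List.getD_eq_getElem _ _ hls]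
  exact (E.pairwise_sort (· ≤ ·)).rel_get_of_le (a := ⟨r, hlr⟩) (b := ⟨s, hls⟩) hrs

lemma yE_mono {E : Finset ℝ} : ∀ r < E.card - 1, yE E r ≤ yE E (r+1) :=
  fun r hr => yE_index_mono (Nat.le_succ r) (by omega)

lemma exists_yE {E : Finset ℝ} {e : ℝ} (he : e ∈ E) : ∃ i < E.card, yE E i = e := by
  have : e ∈ E.sort (· ≤ ·) := (Finset.mem_sort (α := ℝ) (· ≤ ·)).mpr he
  obtain ⟨i, hlen, hi⟩ := List.mem_iff_getElem.mp this
  refine ⟨i, by rwa [Finset.length_sort] at hlen, ?_⟩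
  rw [yE, List.getD_eq_getElem _ _ hlen, hi]

lemma yE_side {E : Finset ℝ} {r : ℕ} (hr : r + 1 < E.card) {e : ℝ} (he : e ∈ E) :
    e ≤ yE E r ∨ yE E (r+1) ≤ e := by
  obtain ⟨i, hi, rfl⟩ := exists_yE he
  rcases le_or_gt i r with h | h
  · exact Or.inl (yE_index_mono h (by omega))
  · exact Or.inr (yE_index_mono h hi)

lemma yE_zero {E : Finset ℝ} (h0 : (0:ℝ) ∈ E) (hlb : ∀ e ∈ E, (0:ℝ) ≤ e) : yE E 0 = 0 := by
  have hc : 0 < E.card := Finset.card_pos.mpr ⟨0, h0⟩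
  refine le_antisymm ?_ (hlb _ (yE_mem hc))
  obtain ⟨i, hi, he⟩ := exists_yE h0
  rw [← he]; exact yE_index_mono (Nat.zero_le i) hi

lemma yE_last {E : Finset ℝ} (h1 : (1:ℝ) ∈ E) (hub : ∀ e ∈ E, e ≤ (1:ℝ)) :
    yE E (E.card - 1) = 1 := by
  have hc : 0 < E.card := Finset.card_pos.mpr ⟨1, h1⟩
  refine le_antisymm (hub _ (yE_mem (by omega))) ?_
  obtain ⟨i, hi, he⟩ := exists_yE h1
  rw [← he]; exact yE_index_mono (by omega) (by omega)

/-- A set is `E`-compatible if it is a finite union of closed intervals with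
endpoints in `E`. -/
def Compat (E : Finset ℝ) (D : Set ℝ) : Prop :=
  ∃ s : Finset (ℝ × ℝ), (∀ p ∈ s, p.1 ∈ E ∧ p.2 ∈ E) ∧ D = ⋃ p ∈ s, Icc p.1 p.2

lemma atom_cases {E : Finset ℝ} {D : Set ℝ} (hD : Compat E D) {r : ℕ}
    (hr : r + 1 < E.card) :
    Ioo (yE E r) (yE E (r+1)) ∩ D = ∅ ∨ Ioo (yE E r) (yE E (r+1)) ⊆ D := by
  obtain ⟨s, hmem, rfl⟩ := hD
  by_cases h : ∃ p ∈ s, (Ioo (yE E r) (yE E (r+1)) ∩ Icc p.1 p.2).Nonempty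
  · obtain ⟨p, hp, x, hx⟩ := h
    refine Or.inr ?_
    have h1 : p.1 ≤ yE E r := by
      rcases yE_side hr (hmem p hp).1 with h | h
      · exact h
      · exact absurd (lt_of_le_of_lt (le_trans h hx.2.1) hx.1.2) (lt_irrefl _)
    have h2 : yE E (r+1) ≤ p.2 := by
      rcases yE_side hr (hmem p hp).2 with h | h
      · exact absurd (lt_of_le_of_lt (le_trans hx.2.2 h) hx.1.1) (lt_irrefl _)
      · exact h
    intro z hz
    exact Set.mem_biUnion hp ⟨le_trans h1 (le_of_lt hz.1), le_trans (le_of_lt hz.2) h2⟩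
  · push_neg at h
    refine Or.inl (Set.eq_empty_of_forall_notMem fun x hx => ?_)
    obtain ⟨hx1, hx2⟩ := hx
    obtain ⟨p, hp, hxp⟩ := Set.mem_iUnion₂.mp hx2
    exact Set.eq_empty_iff_forall_notMem.mp (h p hp) x ⟨hx1, hxp⟩



section extraction
variable {m : ℕ}

lemma mpos (P : MPartition m) : 0 < m := by
  have h0 : (0:ℝ) ∈ ⋃ k, P.dist k := by
    rw [P.cover]; exact ⟨le_refl 0, zero_le_one⟩
  obtain ⟨k, -⟩ := mem_iUnion.mp h0
  exact k.pos

lemma volume_dist_inter {P : MPartition m} {k l : Fin m} (h : k ≠ l) :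
    volume (P.dist k ∩ P.dist l) = 0 := by
  have h1 := P.almost_disjoint k l h
  rw [mu, ENNReal.toReal_eq_zero_iff] at h1
  rcases h1 with h1 | h1
  · exact h1
  · exfalso
    have hle : volume (P.dist k ∩ P.dist l) ≤ volume (Icc (0:ℝ) 1) :=
      measure_mono (fun x hx => (P.isDistrict k).1 hx.1)
    rw [h1, Real.volume_Icc] at hle
    simp at hle

lemma exists_coloring (P : MPartition m) (E : Finset ℝ)
    (hE : ∀ e ∈ E, e ∈ Icc (0:ℝ) 1) (h0 : (0:ℝ) ∈ E) (h1 : (1:ℝ) ∈ E)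
    (hcompat : ∀ k, Compat E (P.dist k)) :
    ∃ c : ℕ → Fin m, ∀ j, P.dist j =ᵐ[volume] bdist (E.card - 1) (yE E) c j := by
  classical
  have hm : 0 < m := mpos P
  set N := E.card - 1 with hN
  set y := yE E with hy
  have hcard : 2 ≤ E.card := Finset.one_lt_card.mpr ⟨0, h0, 1, h1, by norm_num⟩
  have hN1 : 1 ≤ N := by omega
  have hy0 : y 0 = 0 := yE_zero h0 (fun e he => (hE e he).1)
  have hyN : y N = 1 := yE_last h1 (fun e he => (hE e he).2)
  have hmono : ∀ r < N, y r ≤ y (r+1) := fun r hr => yE_mono r (by omega)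
  have choice : ∀ r, r < N → y r < y (r+1) → ∃ k, Ioo (y r) (y (r+1)) ⊆ P.dist k := by
    intro r hr hlt
    set x := (y r + y (r+1))/2 with hx
    have hxIoo : x ∈ Ioo (y r) (y (r+1)) := ⟨by rw [hx]; linarith, by rw [hx]; linarith⟩
    have hx01 : x ∈ Icc (0:ℝ) 1 := by
      have ha := (hE _ (yE_mem (show r < E.card by omega))).1
      have hb := (hE _ (yE_mem (show r+1 < E.card by omega))).2
      exact ⟨by rw [hx]; change 0 ≤ _; linarith [hxIoo.1, hxIoo.2],
             by rw [hx]; change _ ≤ 1; linarith [hxIoo.1, hxIoo.2]⟩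
    have hxmem : x ∈ ⋃ k, P.dist k := by rw [P.cover]; exact hx01
    obtain ⟨k, hk⟩ := mem_iUnion.mp hxmem
    rcases atom_cases (hcompat k) (show r + 1 < E.card by omega) with h | h
    · exact (Set.eq_empty_iff_forall_notMem.mp h x ⟨hxIoo, hk⟩).elim
    · exact ⟨k, h⟩
  set c : ℕ → Fin m := fun r =>
    if h : ∃ k, Ioo (y r) (y (r+1)) ⊆ P.dist k then h.choose else ⟨0, hm⟩ with hcdef
  have hc : ∀ r, r < N → y r < y (r+1) → Ioo (y r) (y (r+1)) ⊆ P.dist (c r) := by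
    intro r hr hlt
    have h := choice r hr hlt
    simp only [hcdef, dif_pos h]
    exact h.choose_spec
  refine ⟨c, fun j => ?_⟩
  rw [ae_eq_set]
  constructor
  · -- dist j \ bdist is null
    have hsub : P.dist j ⊆ ⋃ r ∈ Finset.range N, Icc (y r) (y (r+1)) := by
      rw [cover_union hmono hN1 le_rfl, hy0, hyN]; exact (P.isDistrict j).1
    have hsub2 : P.dist j \ bdist N y c j
        ⊆ ⋃ r ∈ Finset.range N, ((P.dist j ∩ Icc (y r) (y (r+1))) \ bdist N y c j) := by
      intro x hx
      obtain ⟨r, hr, hxr⟩ := mem_iUnion₂.mp (hsub hx.1)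
      exact mem_iUnion₂.mpr ⟨r, hr, ⟨hx.1, hxr⟩, hx.2⟩
    refine measure_mono_null hsub2 (measure_biUnion_null_iff
      (Finset.range N).countable_toSet |>.mpr fun r hr => ?_)
    have hrN : r < N := Finset.mem_range.mp hr
    by_cases hcr : c r = j
    · refine measure_mono_null (fun x hx => (hx.2 ?_).elim) (measure_empty (μ := volume))
      exact Set.mem_biUnion (Finset.mem_filter.mpr ⟨hr, hcr⟩) hx.1.2
    · refine measure_mono_null (t := {y r} ∪ ({y (r+1)} ∪ (P.dist j ∩ P.dist (c r)))) ?_ ?_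
      · intro x hx
        rcases eq_or_ne x (y r) with h | h; · exact Or.inl h
        rcases eq_or_ne x (y (r+1)) with h' | h'; · exact Or.inr (Or.inl h')
        have hxIoo : x ∈ Ioo (y r) (y (r+1)) :=
          ⟨lt_of_le_of_ne hx.1.2.1 (Ne.symm h), lt_of_le_of_ne hx.1.2.2 h'⟩
        have hlt : y r < y (r+1) := lt_trans hxIoo.1 hxIoo.2
        exact Or.inr (Or.inr ⟨hx.1.1, hc r hrN hlt hxIoo⟩)
      · exact measure_union_null (Real.volume_singleton)
          (measure_union_null (Real.volume_singleton)
            (volume_dist_inter (fun hh => hcr hh.symm)))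
  · -- bdist \ dist j is null
    refine measure_mono_null
      (t := ⋃ r ∈ (Finset.range N).filter (fun r => c r = j), (Icc (y r) (y (r+1)) \ P.dist j))
      (fun x hx => ?_) ?_
    · rw [bdist] at hx
      obtain ⟨r, hr, hxr⟩ := mem_iUnion₂.mp hx.1
      exact mem_iUnion₂.mpr ⟨r, hr, hxr, hx.2⟩
    refine measure_biUnion_null_iff (Finset.countable_toSet _) |>.mpr fun r hr => ?_
    have hr' := Finset.mem_filter.mp hr
    have hrN : r < N := Finset.mem_range.mp hr'.1
    rcases eq_or_lt_of_le (hmono r hrN) with heq | hlt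
    · refine measure_mono_null (t := {y r}) (fun x hx => ?_) Real.volume_singleton
      have := hx.1
      rw [← heq, Set.Icc_self] at this
      exact this
    · refine measure_mono_null (t := {y r} ∪ {y (r+1)}) (fun x hx => ?_)
        (measure_union_null Real.volume_singleton Real.volume_singleton)
      rcases eq_or_ne x (y r) with h | h; · exact Or.inl h
      rcases eq_or_ne x (y (r+1)) with h' | h'; · exact Or.inr h'
      exfalso
      refine hx.2 ?_
      have hxIoo : x ∈ Ioo (y r) (y (r+1)) :=
        ⟨lt_of_le_of_ne hx.1.1 (Ne.symm h), lt_of_le_of_ne hx.1.2 h'⟩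
      have := hc r hrN hlt hxIoo
      rwa [hr'.2] at this

lemma coloring_sum {P : MPartition m} {n : ℕ} {y : ℕ → ℝ} {c : ℕ → Fin m}
    (hmono : ∀ r < n, y r ≤ y (r+1)) {j : Fin m}
    (hae : P.dist j =ᵐ[volume] bdist n y c j) :
    ∑ r ∈ (Finset.range n).filter (fun r => c r = j), (y (r+1) - y r) = 1/m := by
  classical
  have : mu (P.dist j) = mu (bdist n y c j) := by
    rw [mu, mu, measure_congr hae]
  rw [← bdist_mu hmono, ← this, P.measure_eq]

lemma coloring_vmass {P : MPartition m} {n : ℕ} {y : ℕ → ℝ} {c : ℕ → Fin m}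
    (hmono : ∀ r < n, y r ≤ y (r+1)) {j : Fin m} {f : ℝ → ℝ} (hf : Integrable f)
    (hae : P.dist j =ᵐ[volume] bdist n y c j) :
    vmass f (P.dist j)
      = ∑ r ∈ (Finset.range n).filter (fun r => c r = j), (prim f (y (r+1)) - prim f (y r)) := by
  rw [vmass, setIntegral_congr_set hae, ← bdist_vmass hmono hf]
  rfl

end extraction


section misc
variable {m : ℕ}

lemma isDistrict_meas {D : Set ℝ} (hD : IsDistrict D) : MeasurableSet D := by
  obtain ⟨-, s, rfl⟩ := hD
  exact s.measurableSet_biUnion fun _ _ => measurableSet_Icc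

lemma isDistrict_rep {D : Set ℝ} (hD : IsDistrict D) :
    ∃ s : Finset (ℝ × ℝ), (∀ p ∈ s, p.1 ∈ D ∧ p.2 ∈ D ∧ p.1 ≤ p.2)
      ∧ D = ⋃ p ∈ s, Icc p.1 p.2 := by
  classical
  obtain ⟨hsub, s, hs⟩ := hD
  refine ⟨s.filter (fun p => p.1 ≤ p.2), fun p hp => ?_, ?_⟩
  · have hp' := Finset.mem_filter.mp hp
    have hmem : Icc p.1 p.2 ⊆ D := by
      rw [hs]; intro x hx; exact Set.mem_biUnion hp'.1 hx
    exact ⟨hmem ⟨le_refl _, hp'.2⟩, hmem ⟨hp'.2, le_refl _⟩, hp'.2⟩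
  · rw [hs]; ext x; simp only [mem_iUnion₂, Finset.mem_filter]
    constructor
    · rintro ⟨p, hp, hx⟩; exact ⟨p, ⟨hp, le_trans hx.1 hx.2⟩, hx⟩
    · rintro ⟨p, ⟨hp, _⟩, hx⟩; exact ⟨p, hp, hx⟩

open Classical in
/-- All endpoints of a canonical interval representation of the districts. -/
def endpoints (P : MPartition m) : Finset ℝ :=
  Finset.univ.biUnion fun k =>
    ((isDistrict_rep (P.isDistrict k)).choose).biUnion fun p => {p.1, p.2}

lemma endpoints_subset (P : MPartition m) : ∀ e ∈ endpoints P, e ∈ Icc (0:ℝ) 1 := by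
  classical
  intro e he
  simp only [endpoints, Finset.mem_biUnion, Finset.mem_insert, Finset.mem_singleton] at he
  obtain ⟨k, -, p, hp, he⟩ := he
  have hspec := (isDistrict_rep (P.isDistrict k)).choose_spec.1 p hp
  rcases he with rfl | rfl
  · exact (P.isDistrict k).1 hspec.1
  · exact (P.isDistrict k).1 hspec.2.1

lemma compat_of_endpoints (P : MPartition m) {E : Finset ℝ} (hPE : endpoints P ⊆ E)
    (k : Fin m) : Compat E (P.dist k) := by
  classical
  refine ⟨(isDistrict_rep (P.isDistrict k)).choose, fun p hp => ?_,
    (isDistrict_rep (P.isDistrict k)).choose_spec.2⟩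
  constructor
  · refine hPE ?_
    simp only [endpoints, Finset.mem_biUnion]
    exact ⟨k, Finset.mem_univ k, p, hp, by simp⟩
  · refine hPE ?_
    simp only [endpoints, Finset.mem_biUnion]
    exact ⟨k, Finset.mem_univ k, p, hp, by simp⟩

open Classical in
lemma path_ivt (W : ℝ → Fin m → ℝ) (cth : ℝ)
    (hW : ∀ j, Continuous (fun t => W t j)) (v : ℕ)
    (h0 : (Finset.univ.filter (fun j => cth < W 0 j)).card ≤ v)
    (h1 : v ≤ (Finset.univ.filter (fun j => cth ≤ W 1 j)).card) :
    ∃ t ∈ Icc (0:ℝ) 1,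
      (Finset.univ.filter (fun j => cth < W t j)).card ≤ v ∧
      v ≤ (Finset.univ.filter (fun j => cth ≤ W t j)).card := by
  by_contra hcon
  push_neg at hcon
  set A := {t : ℝ | (Finset.univ.filter (fun j => cth ≤ W t j)).card < v} with hA
  set B := {t : ℝ | v < (Finset.univ.filter (fun j => cth < W t j)).card} with hB
  have hAopen : IsOpen A := by
    rw [isOpen_iff_mem_nhds]
    intro t ht
    have hev : ∀ᶠ s in nhds t,
        ∀ j ∈ Finset.univ.filter (fun j => W t j < cth), W s j < cth := by
      rw [Filter.eventually_all_finset]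
      intro j hj
      exact (isOpen_lt (hW j) continuous_const).eventually_mem
        ((Finset.mem_filter.mp hj).2)
    refine hev.mono fun s hs => ?_
    have hsubf : Finset.univ.filter (fun j => cth ≤ W s j)
        ⊆ Finset.univ.filter (fun j => cth ≤ W t j) := by
      intro j hj
      rcases lt_or_ge (W t j) cth with h | h
      · exact absurd (hs j (Finset.mem_filter.mpr ⟨Finset.mem_univ j, h⟩))
          (not_lt.mpr (Finset.mem_filter.mp hj).2)
      · exact Finset.mem_filter.mpr ⟨Finset.mem_univ j, h⟩
    exact lt_of_le_of_lt (Finset.card_le_card hsubf) ht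
  have hBopen : IsOpen B := by
    rw [isOpen_iff_mem_nhds]
    intro t ht
    have hev : ∀ᶠ s in nhds t,
        ∀ j ∈ Finset.univ.filter (fun j => cth < W t j), cth < W s j := by
      rw [Filter.eventually_all_finset]
      intro j hj
      exact (isOpen_lt continuous_const (hW j)).eventually_mem
        ((Finset.mem_filter.mp hj).2)
    refine hev.mono fun s hs => ?_
    have hsubf : Finset.univ.filter (fun j => cth < W t j)
        ⊆ Finset.univ.filter (fun j => cth < W s j) := by
      intro j hj
      exact Finset.mem_filter.mpr ⟨Finset.mem_univ j, hs j hj⟩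
    exact lt_of_lt_of_le ht (Finset.card_le_card hsubf)
  have hcover : Icc (0:ℝ) 1 ⊆ A ∪ B := by
    intro t htI
    rcases le_or_gt (Finset.univ.filter (fun j => cth < W t j)).card v with h | h
    · exact Or.inl (hcon t htI h)
    · exact Or.inr h
  have h0A : (0:ℝ) ∈ A := by
    rcases hcover (Set.left_mem_Icc.mpr zero_le_one) with h | h
    · exact h
    · exact absurd h0 (not_le.mpr h)
  have h1B : (1:ℝ) ∈ B := by
    rcases hcover (Set.right_mem_Icc.mpr zero_le_one) with h | h
    · exact absurd h1 (not_le.mpr h)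
    · exact h
  obtain ⟨t, htI, htA, htB⟩ := isPreconnected_Icc A B hAopen hBopen hcover
    ⟨0, Set.left_mem_Icc.mpr zero_le_one, h0A⟩
    ⟨1, Set.right_mem_Icc.mpr zero_le_one, h1B⟩
  have hlohi : (Finset.univ.filter (fun j => cth < W t j)).card
      ≤ (Finset.univ.filter (fun j : Fin m => cth ≤ W t j)).card := by
    refine Finset.card_le_card fun j hj => ?_
    exact Finset.mem_filter.mpr ⟨Finset.mem_univ j, le_of_lt (Finset.mem_filter.mp hj).2⟩
  simp only [hA, Set.mem_setOf_eq] at htA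
  simp only [hB, Set.mem_setOf_eq] at htB
  omega

end misc


section seatsCount
variable {m : ℕ}

open Classical in
lemma seats_eq_card (g : Fin 2 → ℝ → ℝ) (P : MPartition m) (j : Fin 2) :
    seats g P j = (Finset.univ.filter (fun k => Wins g P j k)).card := by
  rw [seats, Nat.card_eq_fintype_card, Fintype.card_subtype]

open Classical in
lemma seats_bounds (g : Fin 2 → ℝ → ℝ) (P : MPartition m) (j : Fin 2) :
    (Finset.univ.filter (fun k => 1/(2*(m:ℝ)) < vmass (g j) (P.dist k))).card ≤ seats g P j
    ∧ seats g P j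
      ≤ (Finset.univ.filter (fun k => 1/(2*(m:ℝ)) ≤ vmass (g j) (P.dist k))).card := by
  rw [seats_eq_card]
  constructor
  · refine Finset.card_le_card fun k hk => ?_
    exact Finset.mem_filter.mpr ⟨Finset.mem_univ k, Or.inl (Finset.mem_filter.mp hk).2⟩
  · refine Finset.card_le_card fun k hk => ?_
    rcases (Finset.mem_filter.mp hk).2 with h | h
    · exact Finset.mem_filter.mpr ⟨Finset.mem_univ k, le_of_lt h⟩
    · exact Finset.mem_filter.mpr ⟨Finset.mem_univ k, le_of_eq h.1.symm⟩

open Classical in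
lemma exists_tie_seats (g : Fin 2 → ℝ → ℝ) {n : ℕ} {y : ℕ → ℝ} {c : ℕ → Fin m}
    (hmono : ∀ r < n, y r ≤ y (r+1)) (hy0 : y 0 = 0) (hyn : y n = 1)
    (hsum : ∀ j, ∑ r ∈ (Finset.range n).filter (fun r => c r = j), (y (r+1) - y r) = 1/m)
    (v : ℕ)
    (hlo : (Finset.univ.filter
      (fun k => 1/(2*(m:ℝ)) < vmass (g 0) (bdist n y c k))).card ≤ v)
    (hhi : v ≤ (Finset.univ.filter
      (fun k => 1/(2*(m:ℝ)) ≤ vmass (g 0) (bdist n y c k))).card) :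
    ∃ tie, seats g (buildPart n y c tie hmono hy0 hyn hsum) 0 = v := by
  set w : Fin m → ℝ := fun k => vmass (g 0) (bdist n y c k) with hw
  set lo := Finset.univ.filter (fun k => 1/(2*(m:ℝ)) < w k) with hloset
  set tied := Finset.univ.filter (fun k => w k = 1/(2*(m:ℝ))) with htiedset
  have hdisj : Disjoint lo tied := by
    rw [Finset.disjoint_left]
    intro k hk hk'
    exact absurd (Finset.mem_filter.mp hk').2 (ne_of_gt (Finset.mem_filter.mp hk).2)
  have hunion : Finset.univ.filter (fun k => 1/(2*(m:ℝ)) ≤ w k) = lo ∪ tied := by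
    ext k
    simp only [hloset, htiedset, Finset.mem_union, Finset.mem_filter, Finset.mem_univ,
      true_and]
    constructor
    · intro h; rcases lt_or_eq_of_le h with h' | h'
      · exact Or.inl h'
      · exact Or.inr h'.symm
    · rintro (h | h); exacts [le_of_lt h, le_of_eq h.symm]
  have hcards : v ≤ lo.card + tied.card := by
    rw [← Finset.card_union_of_disjoint hdisj, ← hunion]; exact hhi
  obtain ⟨T, hT, hTcard⟩ := Finset.exists_subset_card_eq (s := tied) (n := v - lo.card) (by omega)
  refine ⟨fun k => if k ∈ T then 0 else 1, ?_⟩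
  rw [seats_eq_card]
  have hset : Finset.univ.filter
      (fun k => Wins g (buildPart n y c (fun k => if k ∈ T then 0 else 1)
        hmono hy0 hyn hsum) 0 k) = lo ∪ T := by
    ext k
    simp only [Finset.mem_union, Finset.mem_filter, Finset.mem_univ, true_and, hloset]
    simp only [Wins, buildPart]
    constructor
    · rintro (h | ⟨heq, htie⟩)
      · exact Or.inl h
      · by_cases hkT : k ∈ T
        · exact Or.inr hkT
        · rw [if_neg hkT] at htie
          exact absurd htie (by decide)
    · rintro (h | h)
      · exact Or.inl h
      · exact Or.inr ⟨(Finset.mem_filter.mp (hT h)).2, by rw [if_pos h]⟩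
  rw [hset, Finset.card_union_of_disjoint (Finset.disjoint_of_subset_right hT hdisj),
    hTcard]
  omega

lemma integrable_ind01 {f : ℝ → ℝ} (hmeas : Measurable f)
    (hrange : ∀ x ∈ Icc (0:ℝ) 1, f x ∈ Icc (0:ℝ) 1) :
    Integrable ((Icc (0:ℝ) 1).indicator f) := by
  refine Integrable.mono'
    (g := (Icc (0:ℝ) 1).indicator (fun _ => (1:ℝ))) ?_ ?_ (ae_of_all _ fun x => ?_)
  · exact ((integrableOn_const_iff (C := (1:ℝ))).mpr (Or.inr (by rw [Real.volume_Icc]; exact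
      ENNReal.ofReal_lt_top))).integrable_indicator measurableSet_Icc
  · exact (hmeas.indicator measurableSet_Icc).aestronglyMeasurable
  · by_cases hx : x ∈ Icc (0:ℝ) 1
    · rw [Set.indicator_of_mem hx, Set.indicator_of_mem hx, Real.norm_eq_abs,
        abs_le]
      have := hrange x hx
      exact ⟨by linarith [this.1], this.2⟩
    · rw [Set.indicator_of_notMem hx, Set.indicator_of_notMem hx]
      simp

lemma vmass_indicator {f : ℝ → ℝ} {D : Set ℝ} (hD : MeasurableSet D)
    (hsub : D ⊆ Icc (0:ℝ) 1) :
    vmass f D = vmass ((Icc (0:ℝ) 1).indicator f) D := by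
  rw [vmass, vmass]
  exact (setIntegral_congr_fun hD (fun x hx => Set.indicator_of_mem (hsub hx) f)).symm

lemma integrableOn_district {f : ℝ → ℝ} (hmeas : Measurable f)
    (hrange : ∀ x ∈ Icc (0:ℝ) 1, f x ∈ Icc (0:ℝ) 1) {D : Set ℝ} (hD : IsDistrict D) :
    IntegrableOn f D := by
  refine ((integrable_ind01 hmeas hrange).integrableOn).congr_fun
    (fun x hx => Set.indicator_of_mem (hD.1 hx) f) (isDistrict_meas hD)

lemma vmass_pair {f0 f1 : ℝ → ℝ} (h0m : Measurable f0)
    (h0r : ∀ x ∈ Icc (0:ℝ) 1, f0 x ∈ Icc (0:ℝ) 1) (h1m : Measurable f1)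
    (h1r : ∀ x ∈ Icc (0:ℝ) 1, f1 x ∈ Icc (0:ℝ) 1)
    (hsum : ∀ x ∈ Icc (0:ℝ) 1, f0 x + f1 x = 1) {D : Set ℝ} (hD : IsDistrict D) :
    vmass f0 D + vmass f1 D = mu D := by
  have hDm := isDistrict_meas hD
  rw [vmass, vmass, ← integral_add (integrableOn_district h0m h0r hD)
    (integrableOn_district h1m h1r hD)]
  have : ∫ x in D, (f0 x + f1 x) = ∫ x in D, (1:ℝ) :=
    setIntegral_congr_fun hDm (fun x hx => hsum x (hD.1 hx))
  rw [this, setIntegral_const, smul_eq_mul, mul_one, mu, Measure.real]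

end seatsCount


section core
variable {m : ℕ}

lemma sum_range_two_mul (h : ℕ → ℝ) (N : ℕ) :
    ∑ r ∈ Finset.range (2*N), h r = ∑ r ∈ Finset.range N, (h (2*r) + h (2*r+1)) := by
  induction N with
  | zero => simp
  | succ n ih =>
    have h2 : 2*(n+1) = (2*n) + 1 + 1 := by ring
    rw [h2, Finset.sum_range_succ, Finset.sum_range_succ, ih, Finset.sum_range_succ]
    ring

open Classical in
lemma seats_intermediate (g : Fin 2 → ℝ → ℝ)
    (hmeas : Measurable (g 0)) (hrange : ∀ x ∈ Icc (0:ℝ) 1, g 0 x ∈ Icc (0:ℝ) 1)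
    (P Q : MPartition m) (v : ℕ)
    (hPv : seats g P 0 ≤ v) (hvQ : v ≤ seats g Q 0) :
    ∃ R : MPartition m, seats g R 0 = v := by
  have hm : 0 < m := mpos P
  set fI : ℝ → ℝ := (Icc (0:ℝ) 1).indicator (g 0) with hfIdef
  have hfI : Integrable fI := integrable_ind01 hmeas hrange
  set F : ℝ → ℝ := prim fI with hFdef
  have hF : Continuous F := continuous_prim hfI
  -- common refinement endpoints
  set E : Finset ℝ := insert 0 (insert 1 (endpoints P ∪ endpoints Q)) with hEdef
  have h0E : (0:ℝ) ∈ E := Finset.mem_insert_self _ _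
  have h1E : (1:ℝ) ∈ E := Finset.mem_insert_of_mem (Finset.mem_insert_self _ _)
  have hE : ∀ e ∈ E, e ∈ Icc (0:ℝ) 1 := by
    intro e he
    rcases Finset.mem_insert.mp he with rfl | he
    · exact ⟨le_refl 0, zero_le_one⟩
    rcases Finset.mem_insert.mp he with rfl | he
    · exact ⟨zero_le_one, le_refl 1⟩
    rcases Finset.mem_union.mp he with he | he
    · exact endpoints_subset P e he
    · exact endpoints_subset Q e he
  have hPcomp : ∀ k, Compat E (P.dist k) :=
    compat_of_endpoints P (fun e he => Finset.mem_insert_of_mem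
      (Finset.mem_insert_of_mem (Finset.mem_union_left _ he)))
  have hQcomp : ∀ k, Compat E (Q.dist k) :=
    compat_of_endpoints Q (fun e he => Finset.mem_insert_of_mem
      (Finset.mem_insert_of_mem (Finset.mem_union_right _ he)))
  obtain ⟨cP, hcP⟩ := exists_coloring P E hE h0E h1E hPcomp
  obtain ⟨cQ, hcQ⟩ := exists_coloring Q E hE h0E h1E hQcomp
  set N : ℕ := E.card - 1 with hNdef
  set y : ℕ → ℝ := yE E with hydef
  have hcard : 2 ≤ E.card := Finset.one_lt_card.mpr ⟨0, h0E, 1, h1E, by norm_num⟩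
  have hy0 : y 0 = 0 := yE_zero h0E (fun e he => (hE e he).1)
  have hyN : y N = 1 := yE_last h1E (fun e he => (hE e he).2)
  have hmono : ∀ r < N, y r ≤ y (r+1) := fun r hr => yE_mono r (by omega)
  have hsumP : ∀ j, ∑ r ∈ (Finset.range N).filter (fun r => cP r = j),
      (y (r+1) - y r) = 1/m := fun j => coloring_sum hmono (hcP j)
  have hsumQ : ∀ j, ∑ r ∈ (Finset.range N).filter (fun r => cQ r = j),
      (y (r+1) - y r) = 1/m := fun j => coloring_sum hmono (hcQ j)
  -- the path
  set z : ℕ → ℝ → ℝ := fun r t => y r + (1-t) * (y (r+1) - y r) with hzdef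
  set Y : ℝ → ℕ → ℝ := fun t r => if r % 2 = 0 then y (r/2) else z (r/2) t with hYdef
  set C : ℕ → Fin m := fun r => if r % 2 = 0 then cP (r/2) else cQ (r/2) with hCdef
  have hYeven : ∀ t r, Y t (2*r) = y r := by
    intro t r
    simp only [hYdef]
    rw [if_pos (by omega), Nat.mul_div_cancel_left r (by norm_num)]
  have hYodd : ∀ t r, Y t (2*r+1) = z r t := by
    intro t r
    simp only [hYdef]
    rw [if_neg (by omega)]
    congr 1
    omega
  have hCeven : ∀ r, C (2*r) = cP r := by
    intro r
    simp only [hCdef]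
    rw [if_pos (by omega), Nat.mul_div_cancel_left r (by norm_num)]
  have hCodd : ∀ r, C (2*r+1) = cQ r := by
    intro r
    simp only [hCdef]
    rw [if_neg (by omega)]
    congr 1
    omega
  -- generic parity splitting of filtered sums
  have hsplit : ∀ (u : ℕ → ℝ) (j : Fin m),
      ∑ r ∈ (Finset.range (2*N)).filter (fun r => C r = j), u r
        = ∑ r ∈ Finset.range N,
            ((if cP r = j then u (2*r) else 0) + (if cQ r = j then u (2*r+1) else 0)) := by
    intro u j
    rw [Finset.sum_filter, sum_range_two_mul]
    refine Finset.sum_congr rfl fun r hr => ?_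
    rw [hCeven r, hCodd r]
  -- cut data for each time t
  have hYmono : ∀ t ∈ Icc (0:ℝ) 1, ∀ r < 2*N, Y t r ≤ Y t (r+1) := by
    intro t ht r hr
    rcases Nat.even_or_odd r with ⟨q, hq⟩ | ⟨q, hq⟩
    · have hq2 : r = 2*q := by omega
      subst hq2
      rw [hYeven, hYodd]
      have hlen : 0 ≤ y (q+1) - y q := sub_nonneg.mpr (hmono q (by omega))
      have h1t : 0 ≤ 1 - t := by linarith [ht.2]
      simp only [hzdef]
      nlinarith
    · have hq2 : r = 2*q + 1 := by omega
      subst hq2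
      have h22 : 2*q+1+1 = 2*(q+1) := by ring
      rw [hYodd, h22, hYeven]
      have hlen : 0 ≤ y (q+1) - y q := sub_nonneg.mpr (hmono q (by omega))
      have h1t : 0 ≤ t := ht.1
      simp only [hzdef]
      nlinarith
  have hY0 : ∀ t, Y t 0 = 0 := by
    intro t
    have : (0:ℕ) = 2*0 := rfl
    rw [this, hYeven, hy0]
  have hYN : ∀ t, Y t (2*N) = 1 := by
    intro t; rw [hYeven, hyN]
  have hYsum : ∀ t ∈ Icc (0:ℝ) 1, ∀ j,
      ∑ r ∈ (Finset.range (2*N)).filter (fun r => C r = j), (Y t (r+1) - Y t r) = 1/m := by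
    intro t ht j
    rw [hsplit]
    have hterm : ∀ r ∈ Finset.range N,
        ((if cP r = j then Y t (2*r+1) - Y t (2*r) else 0)
          + (if cQ r = j then Y t (2*r+1+1) - Y t (2*r+1) else 0))
        = (1-t) * (if cP r = j then y (r+1) - y r else 0)
          + t * (if cQ r = j then y (r+1) - y r else 0) := by
      intro r hr
      have h22 : 2*r+1+1 = 2*(r+1) := by ring
      rw [hYodd, hYeven, h22, hYeven]
      simp only [hzdef, mul_ite, mul_zero]
      congr 1
      · split_ifs <;> ring
      · split_ifs <;> ring
    rw [Finset.sum_congr rfl hterm, Finset.sum_add_distrib, ← Finset.mul_sum, ← Finset.mul_sum,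
      ← Finset.sum_filter, ← Finset.sum_filter, hsumP, hsumQ]
    ring
  -- the continuous seat-mass functions
  set W : ℝ → Fin m → ℝ := fun t j =>
    ∑ r ∈ (Finset.range (2*N)).filter (fun r => C r = j), (F (Y t (r+1)) - F (Y t r))
    with hWdef
  have hYc : ∀ r, Continuous (fun t => Y t r) := by
    intro r
    simp only [hYdef]
    by_cases h : r % 2 = 0
    · simp only [if_pos h]; exact continuous_const
    · simp only [if_neg h, hzdef]
      exact continuous_const.add ((continuous_const.sub continuous_id).mul continuous_const)
  have hWc : ∀ j, Continuous (fun t => W t j) := by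
    intro j
    refine continuous_finset_sum _ fun r _ => ?_
    exact (hF.comp (hYc (r+1))).sub (hF.comp (hYc r))
  -- vmass of built districts equals W
  have hWb : ∀ t ∈ Icc (0:ℝ) 1, ∀ j, vmass (g 0) (bdist (2*N) (Y t) C j) = W t j := by
    intro t ht j
    rw [vmass_indicator (bdist_measurable j) (bdist_subset (hYmono t ht) (hY0 t) (hYN t) j),
      ← hfIdef]
    exact bdist_vmass (hYmono t ht) hfI j
  -- endpoint identification
  have hz0 : ∀ r, z r 0 = y (r+1) := by intro r; simp only [hzdef]; ring
  have hz1 : ∀ r, z r 1 = y r := by intro r; simp only [hzdef]; ring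
  have hterm0 : ∀ j, W 0 j
      = ∑ r ∈ (Finset.range N).filter (fun r => cP r = j), (F (y (r+1)) - F (y r)) := by
    intro j
    have hb : W 0 j = ∑ r ∈ (Finset.range (2*N)).filter (fun r => C r = j),
        (F (Y 0 (r+1)) - F (Y 0 r)) := rfl
    rw [hb, hsplit, Finset.sum_filter]
    refine Finset.sum_congr rfl fun r hr => ?_
    have h22 : 2*r+1+1 = 2*(r+1) := by ring
    rw [h22, hYodd, hYeven, hYeven, hz0]
    simp only [sub_self, ite_self, add_zero]
  have hterm1 : ∀ j, W 1 j
      = ∑ r ∈ (Finset.range N).filter (fun r => cQ r = j), (F (y (r+1)) - F (y r)) := by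
    intro j
    have hb : W 1 j = ∑ r ∈ (Finset.range (2*N)).filter (fun r => C r = j),
        (F (Y 1 (r+1)) - F (Y 1 r)) := rfl
    rw [hb, hsplit, Finset.sum_filter]
    refine Finset.sum_congr rfl fun r hr => ?_
    have h22 : 2*r+1+1 = 2*(r+1) := by ring
    rw [h22, hYodd, hYeven, hYeven, hz1]
    simp only [sub_self, ite_self, zero_add]
  have hWP : ∀ j, W 0 j = vmass (g 0) (P.dist j) := by
    intro j
    rw [hterm0 j, vmass_indicator (isDistrict_meas (P.isDistrict j)) (P.isDistrict j).1,
      ← hfIdef, coloring_vmass hmono hfI (hcP j), hFdef]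
  have hWQ : ∀ j, W 1 j = vmass (g 0) (Q.dist j) := by
    intro j
    rw [hterm1 j, vmass_indicator (isDistrict_meas (Q.isDistrict j)) (Q.isDistrict j).1,
      ← hfIdef, coloring_vmass hmono hfI (hcQ j), hFdef]
  -- endpoint seat bounds
  have hfeq0 : (Finset.univ.filter (fun j => 1/(2*(m:ℝ)) < W 0 j))
      = (Finset.univ.filter (fun k => 1/(2*(m:ℝ)) < vmass (g 0) (P.dist k))) := by
    refine Finset.filter_congr fun k _ => ?_
    rw [hWP k]
  have hfeq1 : (Finset.univ.filter (fun j => 1/(2*(m:ℝ)) ≤ W 1 j))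
      = (Finset.univ.filter (fun k => 1/(2*(m:ℝ)) ≤ vmass (g 0) (Q.dist k))) := by
    refine Finset.filter_congr fun k _ => ?_
    rw [hWQ k]
  have h0 : (Finset.univ.filter (fun j => 1/(2*(m:ℝ)) < W 0 j)).card ≤ v := by
    rw [hfeq0]
    exact le_trans (seats_bounds g P 0).1 hPv
  have h1 : v ≤ (Finset.univ.filter (fun j => 1/(2*(m:ℝ)) ≤ W 1 j)).card := by
    rw [hfeq1]
    exact le_trans hvQ (seats_bounds g Q 0).2
  obtain ⟨t, ht, hlo, hhi⟩ := path_ivt W (1/(2*(m:ℝ))) hWc v h0 h1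
  have hfeqt1 : (Finset.univ.filter
      (fun k => 1/(2*(m:ℝ)) < vmass (g 0) (bdist (2*N) (Y t) C k)))
      = (Finset.univ.filter (fun j => 1/(2*(m:ℝ)) < W t j)) := by
    refine Finset.filter_congr fun k _ => ?_
    rw [hWb t ht k]
  have hfeqt2 : (Finset.univ.filter
      (fun k => 1/(2*(m:ℝ)) ≤ vmass (g 0) (bdist (2*N) (Y t) C k)))
      = (Finset.univ.filter (fun j => 1/(2*(m:ℝ)) ≤ W t j)) := by
    refine Finset.filter_congr fun k _ => ?_
    rw [hWb t ht k]
  have hlo' : (Finset.univ.filter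
      (fun k => 1/(2*(m:ℝ)) < vmass (g 0) (bdist (2*N) (Y t) C k))).card ≤ v := by
    rw [hfeqt1]; exact hlo
  have hhi' : v ≤ (Finset.univ.filter
      (fun k => 1/(2*(m:ℝ)) ≤ vmass (g 0) (bdist (2*N) (Y t) C k))).card := by
    rw [hfeqt2]; exact hhi
  obtain ⟨tie, htie⟩ := exists_tie_seats g (hYmono t ht) (hY0 t) (hYN t) (hYsum t ht)
    v hlo' hhi'
  exact ⟨_, htie⟩

end core


section assembly
variable {m : ℕ}

lemma fin2_cases (i : Fin 2) : i = 0 ∨ i = 1 := by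
  rcases i with ⟨iv, hiv⟩
  interval_cases iv
  · exact Or.inl rfl
  · exact Or.inr rfl

lemma seats_le (g : Fin 2 → ℝ → ℝ) (P : MPartition m) (j : Fin 2) : seats g P j ≤ m := by
  classical
  rw [seats_eq_card]
  exact le_trans (Finset.card_filter_le _ _) (by rw [Finset.card_univ, Fintype.card_fin])

lemma seatSet_nonempty (hm : 1 ≤ m) (g : Fin 2 → ℝ → ℝ) (j : Fin 2) :
    (seatSet g m j).Nonempty := by
  classical
  have hm0 : 0 < m := hm
  have hmR : (0:ℝ) < m := by exact_mod_cast hm0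
  set y : ℕ → ℝ := fun r => (r : ℝ) / m with hydef
  set c : ℕ → Fin m := fun r => ⟨r % m, Nat.mod_lt r hm0⟩ with hcdef
  have hmono : ∀ r < m, y r ≤ y (r+1) := by
    intro r hr
    simp only [hydef]
    rw [div_le_div_iff_of_pos_right hmR]
    push_cast
    linarith
  have hy0 : y 0 = 0 := by simp [hydef]
  have hyn : y m = 1 := by
    simp only [hydef]
    exact div_self (ne_of_gt hmR)
  have hsum : ∀ k : Fin m, ∑ r ∈ (Finset.range m).filter (fun r => c r = k),
      (y (r+1) - y r) = 1/m := by
    intro k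
    have hfilt : (Finset.range m).filter (fun r => c r = k) = {(k : ℕ)} := by
      ext r
      simp only [Finset.mem_filter, Finset.mem_range, Finset.mem_singleton, hcdef]
      constructor
      · rintro ⟨hr, hck⟩
        have : r % m = (k : ℕ) := by
          have := congrArg Fin.val hck
          simpa using this
        rwa [Nat.mod_eq_of_lt hr] at this
      · rintro rfl
        refine ⟨k.isLt, ?_⟩
        ext
        simp [Nat.mod_eq_of_lt k.isLt]
    rw [hfilt, Finset.sum_singleton]
    simp only [hydef]
    push_cast
    field_simp
    ring
  exact ⟨seats g (buildPart m y c (fun _ => 0) hmono hy0 hyn hsum) j, _, rfl⟩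

lemma wins_compl (g : Fin 2 → ℝ → ℝ)
    (h0m : Measurable (g 0)) (h0r : ∀ x ∈ Icc (0:ℝ) 1, g 0 x ∈ Icc (0:ℝ) 1)
    (h1m : Measurable (g 1)) (h1r : ∀ x ∈ Icc (0:ℝ) 1, g 1 x ∈ Icc (0:ℝ) 1)
    (hsum : ∀ x ∈ Icc (0:ℝ) 1, g 0 x + g 1 x = 1)
    (P : MPartition m) (k : Fin m) :
    Wins g P 1 k ↔ ¬ Wins g P 0 k := by
  have hm0 : 0 < m := mpos P
  have hmR : (0:ℝ) < m := by exact_mod_cast hm0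
  have hpair := vmass_pair h0m h0r h1m h1r hsum (P.isDistrict k)
  rw [P.measure_eq k] at hpair
  have hkey : vmass (g 0) (P.dist k) + vmass (g 1) (P.dist k) = 2 * (1/(2*(m:ℝ))) := by
    rw [hpair]; field_simp
  set w0 := vmass (g 0) (P.dist k)
  set w1 := vmass (g 1) (P.dist k)
  set cth := 1/(2*(m:ℝ)) with hcth
  constructor
  · rintro (h | ⟨heq, htie⟩)
    · rintro (h' | ⟨heq', -⟩)
      · linarith
      · linarith
    · rintro (h' | ⟨-, htie'⟩)
      · linarith
      · rw [htie'] at htie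
        exact absurd htie (by decide)
  · intro hnot
    rcases lt_trichotomy w0 cth with h | h | h
    · exact Or.inl (by linarith)
    · rcases fin2_cases (P.tie k) with htie | htie
      · exact absurd (Or.inr ⟨h, htie⟩) hnot
      · exact Or.inr ⟨by linarith, htie⟩
    · exact absurd (Or.inl h) hnot

open Classical in
lemma seats_sum (g : Fin 2 → ℝ → ℝ)
    (h0m : Measurable (g 0)) (h0r : ∀ x ∈ Icc (0:ℝ) 1, g 0 x ∈ Icc (0:ℝ) 1)
    (h1m : Measurable (g 1)) (h1r : ∀ x ∈ Icc (0:ℝ) 1, g 1 x ∈ Icc (0:ℝ) 1)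
    (hsum : ∀ x ∈ Icc (0:ℝ) 1, g 0 x + g 1 x = 1)
    (P : MPartition m) :
    seats g P 0 + seats g P 1 = m := by
  rw [seats_eq_card, seats_eq_card]
  have hfeq : Finset.univ.filter (fun k => Wins g P 1 k)
      = Finset.univ.filter (fun k => ¬ Wins g P 0 k) :=
    Finset.filter_congr fun k _ => wins_compl g h0m h0r h1m h1r hsum P k
  rw [hfeq, Finset.card_filter_add_card_filter_not, Finset.card_univ,
    Fintype.card_fin]

end assembly

end GTaux

/-- Existence of GT partitions under common beliefs: if both parties agree on
the distribution of party 1's support, there is an `m`-partition meeting the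
geometric target of each party (computed w.r.t. its own data). -/
theorem gt_partition_exists_of_agreement (m : ℕ) (hm : 1 ≤ m)
    (g : Fin 2 → Fin 2 → ℝ → ℝ)
    (hgmeas : ∀ i j, Measurable (g i j))
    (hgrange : ∀ i j, ∀ x ∈ Icc (0:ℝ) 1, g i j x ∈ Icc (0:ℝ) 1)
    (hgsum : ∀ i, ∀ x ∈ Icc (0:ℝ) 1, g i 0 x + g i 1 x = 1)
    (hagree : ∀ D, IsDistrict D → vmass (g 0 0) D = vmass (g 1 0) D) :
    ∃ P : MPartition m, ∀ i : Fin 2,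
      (sInf (seatSet (g i) m i) + sSup (seatSet (g i) m i)) / 2 ≤
        seats (g i) P i := by
  classical
  have hm0 : 0 < m := hm
  have hagree' : ∀ D, IsDistrict D → ∀ j : Fin 2, vmass (g 1 j) D = vmass (g 0 j) D := by
    intro D hD j
    rcases GTaux.fin2_cases j with rfl | rfl
    · exact (hagree D hD).symm
    · have h0 := GTaux.vmass_pair (hgmeas 0 0) (hgrange 0 0) (hgmeas 0 1) (hgrange 0 1)
        (hgsum 0) hD
      have h1 := GTaux.vmass_pair (hgmeas 1 0) (hgrange 1 0) (hgmeas 1 1) (hgrange 1 1)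
        (hgsum 1) hD
      have h2 := hagree D hD
      linarith
  have hwins : ∀ (P : MPartition m) (j : Fin 2) (k : Fin m),
      Wins (g 1) P j k ↔ Wins (g 0) P j k := by
    intro P j k
    rw [Wins, Wins, hagree' (P.dist k) (P.isDistrict k) j]
  have hseatsA : ∀ (P : MPartition m) (j : Fin 2), seats (g 1) P j = seats (g 0) P j := by
    intro P j
    rw [GTaux.seats_eq_card, GTaux.seats_eq_card]
    congr 1
    exact Finset.filter_congr fun k _ => hwins P j k
  have hsumR : ∀ P : MPartition m, seats (g 0) P 0 + seats (g 0) P 1 = m :=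
    fun P => GTaux.seats_sum (g 0) (hgmeas 0 0) (hgrange 0 0) (hgmeas 0 1) (hgrange 0 1)
      (hgsum 0) P
  set S := seatSet (g 0) m 0 with hSdef
  have hSne : S.Nonempty := GTaux.seatSet_nonempty hm (g 0) 0
  have hSb : ∀ u ∈ S, u ≤ m := by rintro u ⟨P, rfl⟩; exact GTaux.seats_le (g 0) P 0
  set a := sInf S with hadef
  set b := sSup S with hbdef
  have haS : a ∈ S := Nat.sInf_mem hSne
  have hbS : b ∈ S := Nat.sSup_mem hSne ⟨m, fun u hu => hSb u hu⟩
  have hab : a ≤ b := Nat.sInf_le hbS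
  obtain ⟨Pa, hPa⟩ := haS
  obtain ⟨Pb, hPb⟩ := hbS
  have hbm : b ≤ m := by rw [← hPb]; exact GTaux.seats_le (g 0) Pb 0
  set v := (a+b+1)/2 with hvdef
  have hav : a ≤ v := by omega
  have hvb : v ≤ b := by omega
  obtain ⟨R, hR⟩ := GTaux.seats_intermediate (g 0) (hgmeas 0 0) (hgrange 0 0) Pa Pb v
    (by rw [hPa]; exact hav) (by rw [hPb]; exact hvb)
  set S1 := seatSet (g 0) m 1 with hS1def
  have hS1b : (m - b) ∈ S1 := ⟨Pb, by have := hsumR Pb; omega⟩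
  have hS1a : (m - a) ∈ S1 := ⟨Pa, by have := hsumR Pa; omega⟩
  have hS1lb : ∀ u ∈ S1, m - b ≤ u := by
    rintro u ⟨P, rfl⟩
    have h1 : seats (g 0) P 0 ≤ b := le_csSup ⟨m, fun x hx => hSb x hx⟩ ⟨P, rfl⟩
    have := hsumR P
    omega
  have hS1ub : ∀ u ∈ S1, u ≤ m - a := by
    rintro u ⟨P, rfl⟩
    have h1 : a ≤ seats (g 0) P 0 := Nat.sInf_le ⟨P, rfl⟩
    have := hsumR P
    omega
  have hInf1 : sInf S1 = m - b :=
    le_antisymm (Nat.sInf_le hS1b) (le_csInf ⟨_, hS1b⟩ hS1lb)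
  have hSup1 : sSup S1 = m - a :=
    le_antisymm (csSup_le ⟨_, hS1b⟩ hS1ub)
      (le_csSup ⟨m - a, fun u hu => hS1ub u hu⟩ hS1a)
  have hSS1 : seatSet (g 1) m 1 = S1 := by
    ext u
    constructor
    · rintro ⟨P, h⟩; exact ⟨P, by rw [← hseatsA P 1]; exact h⟩
    · rintro ⟨P, h⟩; exact ⟨P, by rw [hseatsA P 1]; exact h⟩
  refine ⟨R, fun i => ?_⟩
  rcases GTaux.fin2_cases i with rfl | rfl
  · rw [← hSdef, ← hadef, ← hbdef, hR]
    omega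
  · rw [hSS1, hInf1, hSup1, hseatsA R 1]
    have h2 := hsumR R
    rw [hR] at h2
    omega
end
end

section
/- Let X ⊆ [0,1] be a district with measure μ(X) = m_i/m and suppose D₁, D₂ are disjoint districts each of measure m_j/(2m) with m_j ≤ m_i. Then D₁ ∩ X and D₂ ∩ X each have measure at most μ(X)/2, and hence can be extended to districts D₁', D₂' ⊆ X that partition X (up to measure zero) with μ(D₁') = μ(D₂') = m_i/(2m). -/
open MeasureTheory Set

noncomputable section

lemma IsDistrict.measurableSet {D : Set ℝ} (h : IsDistrict D) : MeasurableSet D := by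
  obtain ⟨-, s, rfl⟩ := h
  exact s.measurableSet_biUnion (fun p _ => measurableSet_Icc)

lemma IsDistrict.isClosed {D : Set ℝ} (h : IsDistrict D) : IsClosed D := by
  obtain ⟨-, s, rfl⟩ := h
  exact s.finite_toSet.isClosed_biUnion (fun p _ => isClosed_Icc)

lemma vol_ne_top {A : Set ℝ} (h : A ⊆ Icc 0 1) : volume A ≠ ⊤ := by
  refine ne_top_of_le_ne_top ?_ (measure_mono h)
  simp [Real.volume_Icc]

lemma mu_nonneg (A : Set ℝ) : 0 ≤ mu A := ENNReal.toReal_nonneg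

lemma mu_mono' {A B : Set ℝ} (hAB : A ⊆ B) (hB : volume B ≠ ⊤) : mu A ≤ mu B :=
  ENNReal.toReal_mono hB (measure_mono hAB)

lemma mu_mono {A B : Set ℝ} (hAB : A ⊆ B) (hB : B ⊆ Icc 0 1) : mu A ≤ mu B :=
  mu_mono' hAB (vol_ne_top hB)

lemma mu_eq_zero {A : Set ℝ} (h : volume A = 0) : mu A = 0 := by simp [mu, h]

lemma vol_eq_zero {A : Set ℝ} (hA : A ⊆ Icc 0 1) (h : mu A = 0) : volume A = 0 := by
  have := vol_ne_top hA
  rw [mu, ENNReal.toReal_eq_zero_iff] at h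
  tauto

lemma mu_union_le {A B : Set ℝ} (hA : volume A ≠ ⊤) (hB : volume B ≠ ⊤) :
    mu (A ∪ B) ≤ mu A + mu B := by
  have h := measure_union_le (μ := volume) A B
  calc mu (A ∪ B) ≤ (volume A + volume B).toReal :=
        ENNReal.toReal_mono (by finiteness) h
    _ = mu A + mu B := ENNReal.toReal_add hA hB

lemma mu_union {A B : Set ℝ} (hB : MeasurableSet B) (hA' : volume A ≠ ⊤)
    (hB' : volume B ≠ ⊤) (h0 : volume (A ∩ B) = 0) : mu (A ∪ B) = mu A + mu B := by
  rw [mu, measure_union₀ hB.nullMeasurableSet h0, ENNReal.toReal_add hA' hB']; rfl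

lemma IsDistrict.union {A B : Set ℝ} (hA : IsDistrict A) (hB : IsDistrict B) :
    IsDistrict (A ∪ B) := by
  obtain ⟨hA1, s, rfl⟩ := hA
  obtain ⟨hB1, t, rfl⟩ := hB
  exact ⟨union_subset hA1 hB1, s ∪ t, (Finset.set_biUnion_union s t _).symm⟩

lemma IsDistrict.inter {A B : Set ℝ} (hA : IsDistrict A) (hB : IsDistrict B) :
    IsDistrict (A ∩ B) := by
  obtain ⟨hA1, s, rfl⟩ := hA
  obtain ⟨hB1, t, rfl⟩ := hB
  refine ⟨(inter_subset_left).trans hA1,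
    (s ×ˢ t).image (fun pq => (max pq.1.1 pq.2.1, min pq.1.2 pq.2.2)), ?_⟩
  ext x
  simp only [mem_inter_iff, mem_iUnion, Finset.mem_image, Finset.mem_product, mem_Icc,
    Prod.exists, exists_and_right]
  constructor
  · rintro ⟨⟨a, b, ⟨hab, hax⟩, hxb⟩, ⟨c, d, ⟨hcd, hcx⟩, hxd⟩⟩
    exact ⟨a ⊔ c, b ⊓ d, ⟨⟨a, b, c, d, ⟨hab, hcd⟩, rfl⟩, sup_le hax hcx⟩, le_inf hxb hxd⟩
  · rintro ⟨u, v, ⟨⟨a, b, c, d, ⟨hab, hcd⟩, huv⟩, hux⟩, hxv⟩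
    rw [Prod.mk.injEq] at huv
    obtain ⟨rfl, rfl⟩ := huv
    simp only [sup_le_iff] at hux
    simp only [le_inf_iff] at hxv
    exact ⟨⟨a, b, ⟨hab, hux.1⟩, hxv.1⟩, ⟨c, d, ⟨hcd, hux.2⟩, hxv.2⟩⟩

def IsFUI (D : Set ℝ) : Prop :=
  ∃ s : Finset (Set ℝ), (∀ I ∈ s, OrdConnected I) ∧ D = ⋃ I ∈ s, I

lemma isFUI_of_ordConnected {I : Set ℝ} (h : OrdConnected I) : IsFUI I :=
  ⟨{I}, by simpa using h, by simp⟩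

lemma IsFUI.union {A B : Set ℝ} (hA : IsFUI A) (hB : IsFUI B) : IsFUI (A ∪ B) := by
  classical
  obtain ⟨s, hs, rfl⟩ := hA
  obtain ⟨t, ht, rfl⟩ := hB
  refine ⟨s ∪ t, ?_, (Finset.set_biUnion_union s t _).symm⟩
  intro I hI
  rcases Finset.mem_union.mp hI with h | h
  exacts [hs I h, ht I h]

lemma IsFUI.inter {A B : Set ℝ} (hA : IsFUI A) (hB : IsFUI B) : IsFUI (A ∩ B) := by
  classical
  obtain ⟨s, hs, rfl⟩ := hA
  obtain ⟨t, ht, rfl⟩ := hB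
  refine ⟨(s ×ˢ t).image (fun p => p.1 ∩ p.2), ?_, ?_⟩
  · intro I hI
    simp only [Finset.mem_image, Finset.mem_product, Prod.exists] at hI
    obtain ⟨p, q, ⟨hp, hq⟩, rfl⟩ := hI
    exact (hs _ hp).inter (ht _ hq)
  · ext x
    simp only [mem_inter_iff, mem_iUnion, Finset.mem_image, Finset.mem_product, Prod.exists]
    constructor
    · rintro ⟨⟨I, hI, hxI⟩, ⟨J, hJ, hxJ⟩⟩
      exact ⟨I ∩ J, ⟨I, J, ⟨hI, hJ⟩, rfl⟩, hxI, hxJ⟩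
    · rintro ⟨K, ⟨I, J, ⟨hI, hJ⟩, rfl⟩, hx⟩
      exact ⟨⟨I, hI, hx.1⟩, ⟨J, hJ, hx.2⟩⟩

lemma IsDistrict.isFUI {D : Set ℝ} (h : IsDistrict D) : IsFUI D := by
  classical
  obtain ⟨-, s, rfl⟩ := h
  refine ⟨s.image (fun p => Icc p.1 p.2), ?_, ?_⟩
  · intro I hI
    simp only [Finset.mem_image] at hI
    obtain ⟨p, hp, rfl⟩ := hI
    exact ordConnected_Icc
  · rw [Finset.set_biUnion_finset_image]

lemma compl_Icc' {a b : ℝ} : (Icc a b)ᶜ = Iio a ∪ Ioi b := by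
  ext x
  simp only [mem_compl_iff, mem_Icc, not_and_or, not_le, mem_union, mem_Iio, mem_Ioi]

lemma IsDistrict.isFUI_compl {D : Set ℝ} (h : IsDistrict D) : IsFUI Dᶜ := by
  classical
  obtain ⟨-, s, rfl⟩ := h
  induction s using Finset.induction with
  | empty => simpa using isFUI_of_ordConnected ordConnected_univ
  | insert _ _ hp ih =>
    rw [Finset.set_biUnion_insert, compl_union, compl_Icc']
    exact ((isFUI_of_ordConnected ordConnected_Iio).union
      (isFUI_of_ordConnected ordConnected_Ioi)).inter ih

lemma closure_ordConnected {I : Set ℝ} (h : OrdConnected I) (hsub : I ⊆ Icc 0 1) :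
    (∃ p : ℝ × ℝ, closure I = Icc p.1 p.2) ∧ (closure I \ I).Finite := by
  rcases eq_empty_or_nonempty I with rfl | hne
  · refine ⟨⟨(1, 0), ?_⟩, by simp⟩
    rw [closure_empty]
    exact (Icc_eq_empty (by norm_num : ¬ (1:ℝ) ≤ 0)).symm
  · have hclsub : closure I ⊆ Icc 0 1 := closure_minimal hsub isClosed_Icc
    have hcpt : IsCompact (closure I) := isCompact_Icc.of_isClosed_subset isClosed_closure hclsub
    have hconn : IsConnected (closure I) := ⟨hne.closure, h.isPreconnected.closure⟩
    have hIcc := eq_Icc_of_connected_compact hconn hcpt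
    set a := sInf (closure I) with ha
    set b := sSup (closure I) with hb
    refine ⟨⟨(a, b), hIcc⟩, Set.Finite.subset ((Set.finite_singleton b).insert a) ?_⟩
    rintro x ⟨hxc, hxI⟩
    by_contra hx
    simp only [mem_insert_iff, mem_singleton_iff, not_or] at hx
    rw [hIcc] at hxc
    have hxa : a < x := lt_of_le_of_ne hxc.1 (Ne.symm hx.1)
    have hxb : x < b := lt_of_le_of_ne hxc.2 hx.2
    have hab : a ≤ b := nonempty_Icc.mp (hIcc ▸ hne.closure)
    have hy : ∃ y ∈ I, x ≤ y := by
      by_contra hy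
      push_neg at hy
      have h1 : closure I ⊆ Iic x := closure_minimal (fun z hz => (hy z hz).le) isClosed_Iic
      have h2 : b ∈ closure I := by rw [hIcc]; exact ⟨hab, le_rfl⟩
      exact absurd (h1 h2) (not_le.mpr hxb)
    have hz : ∃ z ∈ I, z ≤ x := by
      by_contra hz
      push_neg at hz
      have h1 : closure I ⊆ Ici x := closure_minimal (fun z hzz => (hz z hzz).le) isClosed_Ici
      have h2 : a ∈ closure I := by rw [hIcc]; exact ⟨le_rfl, hab⟩
      exact absurd (h1 h2) (not_le.mpr hxa)
    obtain ⟨y, hyI, hxy⟩ := hy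
    obtain ⟨z, hzI, hzx⟩ := hz
    exact hxI (h.out hzI hyI ⟨hzx, hxy⟩)

lemma closure_fui {D : Set ℝ} (h : IsFUI D) (hsub : D ⊆ Icc 0 1) :
    IsDistrict (closure D) ∧ (closure D \ D).Finite := by
  classical
  obtain ⟨s, hs, rfl⟩ := h
  have hmem : ∀ I ∈ s, I ⊆ Icc 0 1 := fun I hI =>
    (subset_biUnion_of_mem (u := fun I => I) hI).trans hsub
  have hcl : closure (⋃ I ∈ s, I) = ⋃ I ∈ s, closure I := Finset.closure_biUnion s _
  have key : ∀ I ∈ s, (∃ p : ℝ × ℝ, closure I = Icc p.1 p.2) ∧ (closure I \ I).Finite :=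
    fun I hI => closure_ordConnected (hs I hI) (hmem I hI)
  constructor
  · refine ⟨closure_minimal hsub isClosed_Icc, ?_⟩
    set g : Set ℝ → ℝ × ℝ := fun I =>
      if hI : ∃ p : ℝ × ℝ, closure I = Icc p.1 p.2 then hI.choose else (1, 0) with hg
    refine ⟨s.image g, ?_⟩
    rw [hcl, Finset.set_biUnion_finset_image]
    apply iUnion₂_congr
    intro I hI
    have h1 := (key I hI).1
    rw [hg]
    simp only [h1, dif_pos]
    exact h1.choose_spec
  · rw [hcl]
    have : (⋃ I ∈ s, closure I) \ (⋃ I ∈ s, I) ⊆ ⋃ I ∈ s, (closure I \ I) := by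
      rintro x ⟨hx1, hx2⟩
      simp only [mem_iUnion] at hx1 ⊢
      obtain ⟨I, hI, hxI⟩ := hx1
      refine ⟨I, hI, hxI, fun hxI' => hx2 ?_⟩
      exact mem_biUnion hI hxI'
    exact Set.Finite.subset (s.finite_toSet.biUnion (fun I hI => (key I hI).2)) this

lemma isDistrict_Icc {a b : ℝ} (h : Icc a b ⊆ Icc 0 1) : IsDistrict (Icc a b) :=
  ⟨h, {(a, b)}, by simp⟩

lemma mu_Icc {s t : ℝ} (h : s ≤ t) : mu (Icc s t) = t - s := by
  rw [mu, Real.volume_Icc, ENNReal.toReal_ofReal (sub_nonneg.mpr h)]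

lemma split_exists {Y : Set ℝ} (hY : IsDistrict Y) {a : ℝ} (h0 : 0 ≤ a) (h1 : a ≤ mu Y) :
    ∃ t ∈ Icc (0:ℝ) 1, mu (Y ∩ Icc 0 t) = a := by
  set g : ℝ → ℝ := fun t => mu (Y ∩ Icc 0 t) with hg
  have hvol : ∀ t : ℝ, volume (Y ∩ Icc 0 t) ≠ ⊤ :=
    fun t => vol_ne_top ((inter_subset_left).trans hY.1)
  have hmono : ∀ {s t : ℝ}, s ≤ t → g s ≤ g t := fun {s t} hst =>
    mu_mono' (inter_subset_inter_right _ (Icc_subset_Icc le_rfl hst)) (hvol t)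
  have hlip : ∀ s t : ℝ, s ≤ t → g t ≤ g s + (t - s) := by
    intro s t hst
    have hsub : Y ∩ Icc 0 t ⊆ (Y ∩ Icc 0 s) ∪ Icc s t := by
      rintro x ⟨hxY, hx0, hxt⟩
      rcases le_total x s with h | h
      · exact Or.inl ⟨hxY, hx0, h⟩
      · exact Or.inr ⟨h, hxt⟩
    have hIst : volume (Icc s t) ≠ ⊤ := by simp [Real.volume_Icc]
    calc g t ≤ mu ((Y ∩ Icc 0 s) ∪ Icc s t) :=
          mu_mono' hsub (ne_top_of_le_ne_top
            (ENNReal.add_ne_top.mpr ⟨hvol s, hIst⟩) (measure_union_le _ _))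
      _ ≤ g s + mu (Icc s t) := mu_union_le (hvol s) hIst
      _ = g s + (t - s) := by rw [mu_Icc hst]
  have hcont : Continuous g := by
    refine LipschitzWith.continuous (K := 1) (LipschitzWith.of_dist_le_mul fun s t => ?_)
    simp only [NNReal.coe_one, ENNReal.coe_one, one_mul, Real.dist_eq]
    rcases le_total s t with h | h
    · have h1 := hmono h; have h2 := hlip s t h
      rw [abs_of_nonpos (by linarith), abs_of_nonpos (by linarith)]
      linarith
    · have h1 := hmono h; have h2 := hlip t s h
      rw [abs_of_nonneg (by linarith), abs_of_nonneg (by linarith)]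
      linarith
  have hg0 : g 0 = 0 := by
    refine le_antisymm ?_ (mu_nonneg _)
    have : Y ∩ Icc 0 0 ⊆ {0} := fun x hx => by
      simpa using le_antisymm hx.2.2 hx.2.1
    calc g 0 ≤ mu {0} := mu_mono' this (by simp)
      _ = 0 := by simp [mu]
  have hg1 : g 1 = mu Y := by
    rw [hg]; simp only []
    rw [inter_eq_left.mpr hY.1]
  have hsub := intermediate_value_Icc (by norm_num : (0:ℝ) ≤ 1) hcont.continuousOn
  have ha : a ∈ Icc (g 0) (g 1) := by rw [hg0, hg1]; exact ⟨h0, h1⟩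
  obtain ⟨t, ht, hta⟩ := hsub ha
  exact ⟨t, ht, hta⟩

/-- If `μ(X) = mᵢ/m` and `D₁, D₂` are almost disjoint districts of measure
`mⱼ/(2m)` with `mⱼ ≤ mᵢ`, then `D₁ ∩ X` and `D₂ ∩ X` each have measure at most
`μ(X)/2` and can be enlarged to districts `D₁', D₂' ⊆ X` partitioning `X`
(up to measure-zero overlap), each of measure `mᵢ/(2m)`. -/
theorem enlarge_to_half_partition (m mi mj : ℕ) (hm : 1 ≤ m)
    (hji : mj ≤ mi) (him : mi ≤ m)
    (X : Set ℝ) (hX : IsDistrict X) (hXmeas : mu X = (mi : ℝ) / m)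
    (D₁ D₂ : Set ℝ) (hD₁ : IsDistrict D₁) (hD₂ : IsDistrict D₂)
    (hdisj : mu (D₁ ∩ D₂) = 0)
    (h₁ : mu D₁ = (mj : ℝ) / (2 * m)) (h₂ : mu D₂ = (mj : ℝ) / (2 * m)) :
    mu (D₁ ∩ X) ≤ mu X / 2 ∧ mu (D₂ ∩ X) ≤ mu X / 2 ∧
    ∃ D₁' D₂' : Set ℝ, IsDistrict D₁' ∧ IsDistrict D₂' ∧
      D₁ ∩ X ⊆ D₁' ∧ D₂ ∩ X ⊆ D₂' ∧ D₁' ⊆ X ∧ D₂' ⊆ X ∧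
      D₁' ∪ D₂' = X ∧ mu (D₁' ∩ D₂') = 0 ∧
      mu D₁' = (mi : ℝ) / (2 * m) ∧ mu D₂' = (mi : ℝ) / (2 * m) := by
  have hm0 : (0:ℝ) < m := by exact_mod_cast hm
  set A₁ := D₁ ∩ X with hA₁
  set A₂ := D₂ ∩ X with hA₂
  have hA₁d : IsDistrict A₁ := hD₁.inter hX
  have hA₂d : IsDistrict A₂ := hD₂.inter hX
  have hhalf : mu X / 2 = (mi:ℝ) / (2*m) := by rw [hXmeas]; ring
  have hmj_mi : (mj:ℝ)/(2*m) ≤ (mi:ℝ)/(2*m) := by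
    have : (mj:ℝ) ≤ mi := by exact_mod_cast hji
    gcongr
  have p1 : mu A₁ ≤ (mi:ℝ)/(2*m) :=
    calc mu A₁ ≤ mu D₁ := mu_mono inter_subset_left hD₁.1
      _ = (mj:ℝ)/(2*m) := h₁
      _ ≤ (mi:ℝ)/(2*m) := hmj_mi
  have p2 : mu A₂ ≤ (mi:ℝ)/(2*m) :=
    calc mu A₂ ≤ mu D₂ := mu_mono inter_subset_left hD₂.1
      _ = (mj:ℝ)/(2*m) := h₂
      _ ≤ (mi:ℝ)/(2*m) := hmj_mi
  refine ⟨by rw [hhalf]; exact p1, by rw [hhalf]; exact p2, ?_⟩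
  -- the remainder set and its closure
  set S := X ∩ (D₁ ∪ D₂)ᶜ with hS
  have hS_fui : IsFUI S := hX.isFUI.inter (hD₁.union hD₂).isFUI_compl
  have hSsub : S ⊆ Icc 0 1 := (inter_subset_left).trans hX.1
  obtain ⟨hYd, hFfin⟩ := closure_fui hS_fui hSsub
  set Y := closure S with hY
  have hSY : S ⊆ Y := subset_closure
  have hYX : Y ⊆ X := closure_minimal inter_subset_left hX.isClosed
  have hFnull : volume (Y \ S) = 0 := hFfin.measure_zero _
  have hSmeas : MeasurableSet S :=
    hX.measurableSet.inter (hD₁.union hD₂).measurableSet.compl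
  -- measure bookkeeping
  have hvolX : volume X ≠ ⊤ := vol_ne_top hX.1
  have hvolS : volume S ≠ ⊤ := vol_ne_top hSsub
  have hvolY : volume Y ≠ ⊤ := vol_ne_top hYd.1
  have hvolA₁ : volume A₁ ≠ ⊤ := vol_ne_top hA₁d.1
  have hvolA₂ : volume A₂ ≠ ⊤ := vol_ne_top hA₂d.1
  have hdisjv : volume (D₁ ∩ D₂) = 0 :=
    vol_eq_zero ((inter_subset_left).trans hD₁.1) hdisj
  have hmuYS : mu Y = mu S := by
    refine le_antisymm ?_ (mu_mono' hSY hvolY)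
    have hYeq : Y = S ∪ (Y \ S) := (union_diff_cancel hSY).symm
    calc mu Y = mu (S ∪ (Y \ S)) := by rw [← hYeq]
      _ ≤ mu S + mu (Y \ S) := mu_union_le hvolS (by simp [hFnull])
      _ = mu S := by rw [mu_eq_zero hFnull, add_zero]
  have hA₁A₂ : volume (A₁ ∩ A₂) = 0 := by
    refine measure_mono_null ?_ hdisjv
    rintro x ⟨hx1, hx2⟩
    exact ⟨hx1.1, hx2.1⟩
  have hmuA : mu (A₁ ∪ A₂) = mu A₁ + mu A₂ :=
    mu_union hA₂d.measurableSet hvolA₁ hvolA₂ hA₁A₂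
  have hXdecomp : (A₁ ∪ A₂) ∪ S = X := by
    ext x
    simp only [hA₁, hA₂, hS, mem_union, mem_inter_iff, mem_compl_iff]
    tauto
  have hASdisj : volume ((A₁ ∪ A₂) ∩ S) = 0 := by
    have : (A₁ ∪ A₂) ∩ S = ∅ := by
      ext x
      simp only [hA₁, hA₂, hS, mem_union, mem_inter_iff, mem_compl_iff, mem_empty_iff_false]
      tauto
    simp [this]
  have hmuX : mu X = mu A₁ + mu A₂ + mu S := by
    rw [← hXdecomp, mu_union hSmeas (ne_top_of_le_ne_top hvolX
      (measure_mono ((union_subset_union inter_subset_right inter_subset_right).trans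
        (union_self X).subset))) hvolS hASdisj, hmuA]
  -- choose the split point
  set a := (mi:ℝ)/(2*m) - mu A₁ with ha
  have h0a : 0 ≤ a := by simp only [ha]; linarith
  have hmm : (mi:ℝ)/m - mi/(2*m) = mi/(2*m) := by field_simp; ring
  have haY : a ≤ mu Y := by
    rw [hmuYS]
    have : mu S = mu X - mu A₁ - mu A₂ := by linarith
    rw [this, hXmeas]
    simp only [ha]
    linarith
  obtain ⟨t, ht, hBa⟩ := split_exists hYd h0a haY
  set B₁ := Y ∩ Icc 0 t with hB₁
  set B₂ := Y ∩ Icc t 1 with hB₂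
  have hB₁d : IsDistrict B₁ := hYd.inter (isDistrict_Icc (Icc_subset_Icc le_rfl ht.2))
  have hB₂d : IsDistrict B₂ := hYd.inter (isDistrict_Icc (Icc_subset_Icc ht.1 le_rfl))
  have hvolB₁ : volume B₁ ≠ ⊤ := vol_ne_top hB₁d.1
  have hvolB₂ : volume B₂ ≠ ⊤ := vol_ne_top hB₂d.1
  have hB₁B₂ : volume (B₁ ∩ B₂) = 0 := by
    refine measure_mono_null (fun x hx => ?_) (measure_singleton t)
    exact mem_singleton_iff.mpr (le_antisymm hx.1.2.2 hx.2.2.1)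
  have hBunion : B₁ ∪ B₂ = Y := by
    rw [hB₁, hB₂, ← inter_union_distrib_left, Icc_union_Icc_eq_Icc ht.1 ht.2,
      inter_eq_left.mpr hYd.1]
  have hmuYB : mu Y = mu B₁ + mu B₂ := by
    rw [← hBunion, mu_union hB₂d.measurableSet hvolB₁ hvolB₂ hB₁B₂]
  -- null overlaps of D_i with Y
  have hD1Y : volume (D₁ ∩ Y) = 0 := by
    refine measure_mono_null ?_ hFnull
    rintro x ⟨hx1, hx2⟩
    exact ⟨hx2, fun hxS => hxS.2 (Or.inl hx1)⟩
  have hD2Y : volume (D₂ ∩ Y) = 0 := by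
    refine measure_mono_null ?_ hFnull
    rintro x ⟨hx1, hx2⟩
    exact ⟨hx2, fun hxS => hxS.2 (Or.inr hx1)⟩
  -- define the enlarged districts
  refine ⟨A₁ ∪ B₁, A₂ ∪ B₂, hA₁d.union hB₁d, hA₂d.union hB₂d,
    subset_union_left, subset_union_left,
    union_subset inter_subset_right ((inter_subset_left).trans hYX),
    union_subset inter_subset_right ((inter_subset_left).trans hYX), ?_, ?_, ?_, ?_⟩
  · -- union is X
    have h1 : (A₁ ∪ B₁) ∪ (A₂ ∪ B₂) = (A₁ ∪ A₂) ∪ Y := by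
      rw [union_union_union_comm, hBunion]
    rw [h1]
    refine subset_antisymm
      (union_subset (union_subset inter_subset_right inter_subset_right) hYX) ?_
    rw [← hXdecomp]
    exact union_subset_union_right _ hSY
  · -- null intersection
    apply mu_eq_zero
    refine measure_mono_null (fun x hx => ?_)
      (measure_union_null (measure_union_null (measure_union_null hdisjv hD1Y) hD2Y)
        (measure_singleton t))
    rcases hx.1 with h1 | h1 <;> rcases hx.2 with h2 | h2
    · exact Or.inl (Or.inl (Or.inl ⟨h1.1, h2.1⟩))
    · exact Or.inl (Or.inl (Or.inr ⟨h1.1, h2.1⟩))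
    · exact Or.inl (Or.inr ⟨h2.1, h1.1⟩)
    · exact Or.inr (mem_singleton_iff.mpr (le_antisymm h1.2.2 h2.2.1))
  · -- measure of D₁'
    have hAB : volume (A₁ ∩ B₁) = 0 := by
      refine measure_mono_null ?_ hD1Y
      rintro x ⟨hx1, hx2⟩
      exact ⟨hx1.1, hx2.1⟩
    rw [mu_union hB₁d.measurableSet hvolA₁ hvolB₁ hAB, hBa]
    simp only [ha]
    ring
  · -- measure of D₂'
    have hAB : volume (A₂ ∩ B₂) = 0 := by
      refine measure_mono_null ?_ hD2Y
      rintro x ⟨hx1, hx2⟩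
      exact ⟨hx1.1, hx2.1⟩
    rw [mu_union hB₂d.measurableSet hvolA₂ hvolB₂ hAB]
    have hmuB₂ : mu B₂ = mu Y - a := by rw [hmuYB, hBa]; ring
    rw [hmuB₂, hmuYS]
    have hmuS : mu S = mu X - mu A₁ - mu A₂ := by linarith
    rw [hmuS, hXmeas]
    simp only [ha]
    linarith
end
end
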